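/- Let w : Fin n → ℝ be item weights and, for 0 ≤ i ≤ n, natural k, and finset H of group members, let M(i,k,H) : WithBot ℝ be the maximum of Σ_{j∈P} w j over all finsets P ⊆ [i] with card P = k and ⋃_{j∈P} S j = H (with M = ⊥ when no such P exists). Then for every 1 ≤ i ≤ n and 1 ≤ k, M(i,k,H) = max( M(i−1,k,H), max_{F : F ∪ S i = H} (M(i−1,k−1,F) + w i) ), where the inner maximum ranges over all finsets F of group members with F ∪ S i = H, an empty maximum is ⊥, and ⊥ + w i = ⊥. -/

import Mathlib

/-- The finset of the first `i` items among `Fin n`, i.e. `{0, …, i−1}`. -/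
def firstItems (n i : ℕ) : Finset (Fin n) :=
  Finset.univ.filter (fun j => (j : ℕ) < i)

/-- `Mval n S w i k H` : the maximum of `∑_{j ∈ P} w j` over all packages
`P ⊆ [i]` with `card P = k` and `⋃_{j ∈ P} S j = H`, as an element of
`WithBot ℝ` (it is `⊥` when no such package exists). -/
noncomputable def Mval (n : ℕ) {G : Type} [DecidableEq G] (S : Fin n → Finset G)
    (w : Fin n → ℝ) (i k : ℕ) (H : Finset G) : WithBot ℝ :=
  (((firstItems n i).powerset.filter
      (fun P => P.card = k ∧ P.biUnion S = H)).image
    (fun P => ∑ j ∈ P, w j)).max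

/-!
Split the packages `P ⊆ insert t A` according to whether they contain the new item `t`.
Those that do not are exactly the packages inside `A`; those that do are `insert t P'` with
`P' ⊆ A` one item smaller, and their union `H` is `F ∪ S t` where `F` is the union of `P'`.
-/

open Finset

section MaxPackageValue

variable {ι G : Type*} [DecidableEq G]

/-- `Mval n S w i` is definitionally `maxPackageValue S w (firstItems n i)`. -/
noncomputable def maxPackageValue (S : ι → Finset G) (w : ι → ℝ) (A : Finset ι) (k : ℕ)
    (H : Finset G) : WithBot ℝ :=
  ((A.powerset.filter (fun P => P.card = k ∧ P.biUnion S = H)).image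
    (fun P => ∑ j ∈ P, w j)).max

variable {S : ι → Finset G} {w : ι → ℝ} {A : Finset ι} {k : ℕ} {H : Finset G}

theorem sum_le_maxPackageValue {P : Finset ι} (hPA : P ⊆ A) (hPk : P.card = k)
    (hPH : P.biUnion S = H) : ((∑ j ∈ P, w j : ℝ) : WithBot ℝ) ≤ maxPackageValue S w A k H :=
  le_max (mem_image_of_mem _ (mem_filter.2 ⟨mem_powerset.2 hPA, hPk, hPH⟩))

theorem maxPackageValue_le {b : WithBot ℝ}
    (h : ∀ P ⊆ A, P.card = k → P.biUnion S = H → ((∑ j ∈ P, w j : ℝ) : WithBot ℝ) ≤ b) :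
    maxPackageValue S w A k H ≤ b := by
  refine Finset.max_le fun a ha => ?_
  obtain ⟨P, hP, rfl⟩ := mem_image.1 ha
  obtain ⟨hPA, hPk, hPH⟩ := mem_filter.1 hP
  exact h P (mem_powerset.1 hPA) hPk hPH

theorem exists_sum_eq_maxPackageValue {v : ℝ} (hv : maxPackageValue S w A k H = v) :
    ∃ P ⊆ A, P.card = k ∧ P.biUnion S = H ∧ ∑ j ∈ P, w j = v := by
  obtain ⟨P, hP, hPv⟩ := mem_image.1 (mem_of_max hv)
  obtain ⟨hPA, hPk, hPH⟩ := mem_filter.1 hP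
  exact ⟨P, mem_powerset.1 hPA, hPk, hPH, hPv⟩

theorem maxPackageValue_mono {B : Finset ι} (hAB : A ⊆ B) :
    maxPackageValue S w A k H ≤ maxPackageValue S w B k H :=
  maxPackageValue_le fun _ hPA => sum_le_maxPackageValue (hPA.trans hAB)

variable [DecidableEq ι] {t : ι}

theorem maxPackageValue_add_le_insert (ht : t ∉ A) {F : Finset G} (hF : F ∪ S t = H) :
    maxPackageValue S w A k F + w t ≤ maxPackageValue S w (insert t A) (k + 1) H := by
  cases hv : maxPackageValue S w A k F with
  | bot => simp
  | coe v =>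
    obtain ⟨P, hPA, hPk, hPF, rfl⟩ := exists_sum_eq_maxPackageValue hv
    have htP : t ∉ P := fun h => ht (hPA h)
    rw [← WithBot.coe_add, add_comm, ← sum_insert htP]
    refine sum_le_maxPackageValue (insert_subset_insert t hPA) ?_ ?_
    · rw [card_insert_of_notMem htP, hPk]
    · rw [biUnion_insert, hPF, union_comm, hF]

theorem maxPackageValue_insert_le [Fintype G] :
    maxPackageValue S w (insert t A) (k + 1) H ≤
      max (maxPackageValue S w A (k + 1) H)
        ((univ.filter (fun F => F ∪ S t = H)).sup
          (fun F => maxPackageValue S w A k F + w t)) := by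
  refine maxPackageValue_le fun P hPA hPk hPH => ?_
  by_cases htP : t ∈ P
  · set F := (P.erase t).biUnion S
    have hF : F ∪ S t = H := by
      rw [union_comm, ← biUnion_insert, insert_erase htP, hPH]
    refine le_max_of_le_right (le_sup_of_le (mem_filter.2 ⟨mem_univ F, hF⟩) ?_)
    rw [← sum_erase_add P w htP, WithBot.coe_add]
    gcongr
    refine sum_le_maxPackageValue (subset_insert_iff.1 hPA) ?_ rfl
    rw [card_erase_of_mem htP, hPk, Nat.add_sub_cancel]
  · exact le_max_of_le_left
      (sum_le_maxPackageValue ((subset_insert_iff_of_notMem htP).1 hPA) hPk hPH)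

theorem maxPackageValue_insert [Fintype G] (ht : t ∉ A) :
    maxPackageValue S w (insert t A) (k + 1) H =
      max (maxPackageValue S w A (k + 1) H)
        ((univ.filter (fun F => F ∪ S t = H)).sup
          (fun F => maxPackageValue S w A k F + w t)) :=
  le_antisymm maxPackageValue_insert_le <|
    max_le (maxPackageValue_mono (subset_insert t A)) <|
      Finset.sup_le fun _ hF => maxPackageValue_add_le_insert ht (mem_filter.1 hF).2

end MaxPackageValue

theorem firstItems_succ {n i : ℕ} (hi : i < n) :
    firstItems n (i + 1) = insert ⟨i, hi⟩ (firstItems n i) := by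
  ext j
  simp only [firstItems, mem_filter, mem_univ, true_and, mem_insert, Fin.ext_iff]
  omega

theorem mk_notMem_firstItems {n i : ℕ} (hi : i < n) : (⟨i, hi⟩ : Fin n) ∉ firstItems n i := by
  simp [firstItems]

theorem stmt_10 (n : ℕ) (G : Type) [Fintype G] [DecidableEq G]
    (S : Fin n → Finset G) (w : Fin n → ℝ)
    (i k : ℕ) (h1 : 1 ≤ i) (h2 : i ≤ n) (hk : 1 ≤ k) (H : Finset G) :
    Mval n S w i k H =
      max (Mval n S w (i - 1) k H)
        (((Finset.univ : Finset (Finset G)).filter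
            (fun F => F ∪ S ⟨i - 1, by omega⟩ = H)).sup
          (fun F => Mval n S w (i - 1) (k - 1) F + (w ⟨i - 1, by omega⟩ : WithBot ℝ))) := by
  obtain ⟨i, rfl⟩ := Nat.exists_eq_add_of_le' h1
  obtain ⟨k, rfl⟩ := Nat.exists_eq_add_of_le' hk
  have hi : i < n := by omega
  simp only [Nat.add_sub_cancel]
  change maxPackageValue S w (firstItems n (i + 1)) (k + 1) H = _
  rw [firstItems_succ hi]
  exact maxPackageValue_insert (mk_notMem_firstItems hi)
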